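/- Define G : [0,1/2] × [0,1/2] → ℝ by G(η,t) = 2(t − 1/2)²η² if 0 ≤ η ≤ t ≤ 1/2 and G(η,t) = 2(t − 1/2)²η² − (1/2)(η − t)² if 0 ≤ t ≤ η ≤ 1/2. Then G(η,t) ≥ 0 for all η, t ∈ [0,1/2], and for every η ∈ (0,1/2): ∫₀^η G(η,t) dt = (2/3)η³(1/2 − η)(1 − η) and ∫_η^{1/2} G(η,t) dt = (2/3)η²(1/2 − η)³. -/

import Mathlib

/-- The Green's function (1.2) of `G''' = δ(η − t)` on `[0,1/2]` with
`G(0,t) = G(1/2,t) = G'(0,t) = 0`. -/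
noncomputable def G (η t : ℝ) : ℝ :=
  if η ≤ t then 2 * (t - 1/2)^2 * η^2
  else 2 * (t - 1/2)^2 * η^2 - (1/2) * (η - t)^2

/-!
On the diagonal the two branches of `G` agree, so `G η` is the polynomial
`2 η² (t - 1/2)²` on `[η, 1/2]` and that polynomial minus `(η - t)²/2` on `[0, η]`.
Both integrals are therefore integrals of squares of linear functions. On `[0, η]`
the difference of squares factors as `t (1 - 2η) ((1 - 2t) η + (η - t)) / 2`,
whose factors are nonnegative for `0 ≤ t ≤ η ≤ 1/2`.
-/

open intervalIntegral

theorem integral_sub_const_sq (a b c : ℝ) :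
    ∫ t in a..b, (t - c) ^ 2 = ((b - c) ^ 3 - (a - c) ^ 3) / 3 := by
  rw [integral_comp_sub_right (fun t => t ^ 2), integral_pow]
  norm_num

namespace G

theorem of_le {η t : ℝ} (h : η ≤ t) : G η t = 2 * η ^ 2 * (t - 1/2) ^ 2 := by
  rw [G, if_pos h]; ring

theorem of_ge {η t : ℝ} (h : t ≤ η) :
    G η t = 2 * η ^ 2 * (t - 1/2) ^ 2 - (1/2) * (t - η) ^ 2 := by
  rcases h.lt_or_eq with h | rfl
  · rw [G, if_neg h.not_ge]; ring
  · rw [G, if_pos le_rfl]; ring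

theorem eq_mul_of_ge {η t : ℝ} (h : t ≤ η) :
    G η t = t * (1 - 2 * η) * ((1 - 2 * t) * η + (η - t)) / 2 := by
  rw [of_ge h]; ring

theorem nonneg {η t : ℝ} (hη : η ≤ 1/2) (ht₀ : 0 ≤ t) (ht : t ≤ 1/2) : 0 ≤ G η t := by
  rcases le_total η t with h | h
  · rw [of_le h]; positivity
  · rw [eq_mul_of_ge h]
    have : 0 ≤ (1 - 2 * t) * η := mul_nonneg (by linarith) (by linarith)
    have : 0 ≤ 1 - 2 * η := by linarith
    have : 0 ≤ η - t := by linarith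
    positivity

theorem integral_zero_to {η : ℝ} (hη : 0 ≤ η) :
    ∫ t in (0:ℝ)..η, G η t = (2/3) * η^3 * (1/2 - η) * (1 - η) := by
  have hpoly : ∫ t in (0:ℝ)..η, G η t
      = ∫ t in (0:ℝ)..η, (2 * η ^ 2 * (t - 1/2) ^ 2 - (1/2) * (t - η) ^ 2) :=
    integral_congr fun t ht => of_ge (Set.uIcc_of_le hη ▸ ht).2
  rw [hpoly, integral_sub, integral_const_mul, integral_const_mul, integral_sub_const_sq,
    integral_sub_const_sq]
  · ring
  all_goals exact (by fun_prop : Continuous _).intervalIntegrable _ _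

theorem integral_to_half {η : ℝ} (hη : η ≤ 1/2) :
    ∫ t in η..(1/2:ℝ), G η t = (2/3) * η^2 * (1/2 - η)^3 := by
  have hpoly : ∫ t in η..(1/2:ℝ), G η t = ∫ t in η..(1/2:ℝ), 2 * η ^ 2 * (t - 1/2) ^ 2 :=
    integral_congr fun t ht => of_le (Set.uIcc_of_le hη ▸ ht).1
  rw [hpoly, integral_const_mul, integral_sub_const_sq]
  ring

end G

/-- Nonnegativity of the Green's function and the integral identities (1.2*). -/
theorem greens_function_nonneg_and_integrals :
    (∀ η ∈ Set.Icc (0:ℝ) (1/2), ∀ t ∈ Set.Icc (0:ℝ) (1/2), 0 ≤ G η t) ∧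
    (∀ η ∈ Set.Ioo (0:ℝ) (1/2),
      (∫ t in (0:ℝ)..η, G η t) = (2/3) * η^3 * (1/2 - η) * (1 - η) ∧
      (∫ t in η..(1/2:ℝ), G η t) = (2/3) * η^2 * (1/2 - η)^3) :=
  ⟨fun _ hη _ ht => G.nonneg hη.2 ht.1 ht.2,
    fun _ hη => ⟨G.integral_zero_to hη.1.le, G.integral_to_half hη.2.le⟩⟩
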